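/- Assume k is a field and fix I ∈ 𝓘. The invariant elements of R that are Λ-homogeneous of degree E_I are exactly the scalar multiples of the variable x_I. (Proposition 3.5: x_I is the unique section, up to scalar, of the exceptional boundary divisor E_I.) -/
import Mathlib


open MvPolynomial

noncomputable section

/-- The index set 𝓘: subsets `I ⊆ {1,…,n−1}` with `1 ≤ |I| ≤ n−4`. -/
abbrev Idx (n : ℕ) : Type := {I : Finset (Fin (n - 1)) // 1 ≤ I.card ∧ I.card ≤ n - 4}

/-- The variables of the Cox ring of `X_n`: the `y_i` and the `x_I`. -/
abbrev Vars (n : ℕ) : Type := Fin (n - 1) ⊕ Idx n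

variable (k : Type) [Field k]

/-- `R = k[y_1,…,y_{n−1},(x_I)_{I∈𝓘}]`, the Cox ring of the toric variety `X_n`. -/
abbrev R (n : ℕ) : Type := MvPolynomial (Vars n) k

/-- The variable `y_i`. -/
def yy (n : ℕ) (i : Fin (n - 1)) : R k n := X (Sum.inl i)

/-- The variable `x_I`. -/
def xx (n : ℕ) (I : Idx n) : R k n := X (Sum.inr I)

/-- `z_i = ∏_{I∈𝓘, i∈I} x_I`. -/
def zz (n : ℕ) (i : Fin (n - 1)) : R k n :=
  ∏ I ∈ Finset.univ.filter (fun I : Idx n => i ∈ I.1), xx k n I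

/-- The `k`-algebra homomorphism `τ : R → R[T]` with `τ(x_I) = x_I` and
`τ(y_i) = y_i + T·z_i`.  An element `f ∈ R` is invariant iff `τ f = Polynomial.C f`. -/
def τₐ (n : ℕ) : R k n →ₐ[k] Polynomial (R k n) :=
  aeval (Sum.elim
    (fun i => Polynomial.C (yy k n i) + Polynomial.X * Polynomial.C (zz k n i))
    (fun I => Polynomial.C (xx k n I)))

/-- `Λ = ℤ·H ⊕ ⨁_{I∈𝓘} ℤ·E_I`, the free abelian group on `H` and the `E_I`
(identified with `Pic(X_n) = Pic(M̄_{0,n})`). -/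
abbrev Pic (n : ℕ) : Type := (Unit ⊕ Idx n) →₀ ℤ

/-- The hyperplane class `H`. -/
def Hc (n : ℕ) : Pic n := Finsupp.single (Sum.inl ()) 1

/-- The exceptional class `E_I`. -/
def Ec (n : ℕ) (I : Idx n) : Pic n := Finsupp.single (Sum.inr I) 1

/-- The `Λ`-grading of `R`: `deg y_j = H − Σ_{I∈𝓘, j∉I} E_I` and `deg x_I = E_I`. -/
def wt (n : ℕ) : Vars n → Pic n :=
  Sum.elim
    (fun j => Hc n - ∑ I ∈ Finset.univ.filter (fun I : Idx n => j ∉ I.1), Ec n I)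
    (fun I => Ec n I)

/-- for `I ∈ 𝓘`, the invariant elements of `R` that are `Λ`-homogeneous of
degree `E_I` are exactly the scalar multiples of the variable `x_I` (Proposition 3.5). -/
lemma wtA (n : ℕ) (j : Fin (n-1)) : wt n (Sum.inl j) (Sum.inl ()) = 1 := by
  simp [wt, Hc, Ec, Finsupp.single_apply, Finsupp.finset_sum_apply]

lemma wtB (n : ℕ) (J : Idx n) : wt n (Sum.inr J) (Sum.inl ()) = 0 := by
  simp [wt, Ec, Finsupp.single_apply]

lemma wtD (n : ℕ) (J J' : Idx n) : wt n (Sum.inr J') (Sum.inr J) = if J' = J then 1 else 0 := by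
  simp [wt, Ec, Finsupp.single_apply]

lemma key (n : ℕ) (I : Idx n) (d : Vars n →₀ ℕ)
    (hd : Finsupp.weight (wt n) d = Ec n I) : d = Finsupp.single (Sum.inr I) 1 := by
  have h1 : ∀ a, (Finsupp.weight (wt n) d) a = d.sum fun v c => (c : ℤ) * (wt n v a) := by
    intro a
    rw [Finsupp.weight_apply, Finsupp.sum_apply]
    simp [Finsupp.sum]
  have hinl : ∀ j, d (Sum.inl j) = 0 := by
    have h0 : (d.sum fun v c => (c : ℤ) * (wt n v (Sum.inl ()))) = 0 := by
      rw [← h1, hd]; simp [Ec, Finsupp.single_apply]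
    rw [Finsupp.sum] at h0
    have hnn : ∀ v ∈ d.support, 0 ≤ (d v : ℤ) * (wt n v (Sum.inl ())) := by
      rintro (j | J) _
      · rw [wtA]; positivity
      · rw [wtB]; simp
    have := (Finset.sum_eq_zero_iff_of_nonneg hnn).mp h0
    intro j
    by_cases hj : Sum.inl j ∈ d.support
    · have := this _ hj
      rw [wtA, mul_one] at this
      exact_mod_cast this
    · simpa using Finsupp.notMem_support_iff.mp hj
  ext v
  rcases v with j | J
  · simp [hinl j, Finsupp.single_apply]
  · have h2 : (d.sum fun v c => (c : ℤ) * (wt n v (Sum.inr J))) = Ec n I (Sum.inr J) := by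
      rw [← h1, hd]
    rw [Finsupp.sum] at h2
    have h3 : ∀ v ∈ d.support, (d v : ℤ) * wt n v (Sum.inr J)
        = if v = Sum.inr J then (d v : ℤ) else 0 := by
      rintro (j | J') _
      · simp [hinl j]
      · rw [wtD]
        by_cases h : J' = J <;> simp [h]
    rw [Finset.sum_congr rfl h3, Finset.sum_ite_eq' d.support (Sum.inr J)] at h2
    by_cases hJ : (Sum.inr J : Vars n) ∈ d.support
    · rw [if_pos hJ] at h2
      simp only [Ec, Finsupp.single_apply] at h2
      rcases eq_or_ne I J with rfl | hne
      · simp at h2 ⊢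
        exact_mod_cast h2
      · rw [if_neg (by simpa using hne)] at h2
        have : d (Sum.inr J) = 0 := by exact_mod_cast h2
        simp [this, Finsupp.single_apply, hne]
    · rw [if_neg hJ] at h2
      simp only [Ec, Finsupp.single_apply] at h2
      have hI : ¬ ((Sum.inr I : Unit ⊕ Idx n) = Sum.inr J) := by
        intro h; rw [if_pos h] at h2; omega
      have : I ≠ J := fun h => hI (by rw [h])
      simp [Finsupp.notMem_support_iff.mp hJ, Finsupp.single_apply, this]

theorem stmt6 (n : ℕ) (hn : 5 ≤ n) (I : Idx n) (f : R k n) :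
    (τₐ k n f = Polynomial.C f ∧ IsWeightedHomogeneous (wt n) f (Ec n I))
    ↔ ∃ c : k, f = C c * xx k n I := by
  constructor
  · rintro ⟨-, hf⟩
    refine ⟨coeff (Finsupp.single (Sum.inr I) 1) f, ?_⟩
    apply MvPolynomial.ext; intro d
    rw [xx, coeff_C_mul, coeff_X']
    by_cases hd : Finsupp.single (Sum.inr I) 1 = d
    · rw [if_pos hd, mul_one, hd]
    · rw [if_neg hd, mul_zero]
      by_contra h0
      exact hd (key n I d (hf h0)).symm
  · rintro ⟨c, rfl⟩
    constructor
    · simp [τₐ, xx, Polynomial.C_mul, map_mul]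
    · have h := (isWeightedHomogeneous_C (wt n) c).mul
        (isWeightedHomogeneous_X k (wt n) (Sum.inr I))
      rw [zero_add] at h
      exact h

end
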